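/- For n ≥ 5, in the group EM_n the elements T·σ_{n-1}⁻¹ and α₂ commute (i.e., (Tσ_{n-1}⁻¹)·α₂·(Tσ_{n-1}⁻¹)⁻¹ = α₂), and the element T·σ_{n-1}⁻¹·α₂ has finite order, equal to n−2 if n is even and to 2(n−2) if n is odd. -/

import Mathlib

/-!
The extended mapping class group `EM n` of the `n`-punctured sphere, presented with
generators `σ₁, …, σ_{n-1}`, `T` and relations:
`T² = 1`; `(T σᵢ)² = 1`; `σᵢσⱼ = σⱼσᵢ` for `|i - j| ≥ 2`;
`σᵢσⱼσᵢ = σⱼσᵢσⱼ` for `|i - j| = 1`;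
`σ₁⋯σ_{n-1} σ_{n-1}⋯σ₁ = 1`; `(σ₁⋯σ_{n-1})ⁿ = 1`.
-/

namespace SphereEMCG

/-- Generators: `none` is the reflection `T`; `some i` is the half-twist `σ_{i+1}`. -/
abbrev Gen (n : ℕ) := Option (Fin (n - 1))

/-- The generator `T` as an element of the free group. -/
def Tf (n : ℕ) : FreeGroup (Gen n) := FreeGroup.of (none : Gen n)

/-- The generator `σ_i` (for `1 ≤ i ≤ n - 1`) as an element of the free group. -/
def σf (n : ℕ) (i : ℕ) : FreeGroup (Gen n) :=
  if h : 1 ≤ i ∧ i ≤ n - 1 then FreeGroup.of (some ⟨i - 1, by omega⟩) else 1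

/-- The word `σ_a σ_{a+1} ⋯ σ_b` in the free group. -/
def σfProd (n : ℕ) (a b : ℕ) : FreeGroup (Gen n) :=
  ((List.range' a (b + 1 - a)).map (σf n)).prod

/-- The word `σ_b σ_{b-1} ⋯ σ_a` in the free group. -/
def σfProdRev (n : ℕ) (a b : ℕ) : FreeGroup (Gen n) :=
  ((List.range' a (b + 1 - a)).reverse.map (σf n)).prod

/-- The defining relations of the extended mapping class group of the
`n`-punctured sphere. -/
def rels (n : ℕ) : Set (FreeGroup (Gen n)) :=
  { r | r = Tf n * Tf n
      ∨ (∃ i, 1 ≤ i ∧ i ≤ n - 1 ∧ r = (Tf n * σf n i) * (Tf n * σf n i))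
      ∨ (∃ i j, 1 ≤ i ∧ i ≤ n - 1 ∧ 1 ≤ j ∧ j ≤ n - 1 ∧ (i + 2 ≤ j ∨ j + 2 ≤ i) ∧
          r = σf n i * σf n j * (σf n j * σf n i)⁻¹)
      ∨ (∃ i j, 1 ≤ i ∧ i ≤ n - 1 ∧ 1 ≤ j ∧ j ≤ n - 1 ∧ (i + 1 = j ∨ j + 1 = i) ∧
          r = σf n i * σf n j * σf n i * (σf n j * σf n i * σf n j)⁻¹)
      ∨ r = σfProd n 1 (n - 1) * σfProdRev n 1 (n - 1)
      ∨ r = (σfProd n 1 (n - 1)) ^ n }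

/-- The extended mapping class group of the `n`-punctured sphere, by its
standard presentation. -/
abbrev EM (n : ℕ) := PresentedGroup (rels n)

/-- The orientation-reversing mapping class `T` in `EM n`. -/
def T (n : ℕ) : EM n := PresentedGroup.mk (rels n) (Tf n)

/-- The half-twist `σ_i` in `EM n`. -/
def σ (n : ℕ) (i : ℕ) : EM n := PresentedGroup.mk (rels n) (σf n i)

/-- `α₀ = σ₁ ⋯ σ_{n-1}` in `EM n`. -/
def α₀ (n : ℕ) : EM n := PresentedGroup.mk (rels n) (σfProd n 1 (n - 1))

/-- `α₂ = σ₁ ⋯ σ_{n-3} σ_{n-2}²` in `EM n`. -/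
def α₂ (n : ℕ) : EM n := PresentedGroup.mk (rels n) (σfProd n 1 (n - 2) * σf n (n - 2))

end SphereEMCG
namespace SphereEMCG

variable {n : ℕ}

lemma rel_one {r : FreeGroup (Gen n)} (h : r ∈ rels n) :
    PresentedGroup.mk (rels n) r = 1 := by
  have h2 : r ∈ Subgroup.normalClosure (rels n) := Subgroup.subset_normalClosure h
  exact (QuotientGroup.eq_one_iff r).mpr h2

lemma T_sq : T n * T n = 1 := by
  have := rel_one (n := n) (Or.inl rfl)
  simpa [T, map_mul] using this

lemma Tσ_sq (i : ℕ) (h1 : 1 ≤ i) (h2 : i ≤ n - 1) :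
    T n * σ n i * (T n * σ n i) = 1 := by
  have := rel_one (n := n) (Or.inr (Or.inl ⟨i, h1, h2, rfl⟩))
  simpa [T, σ, map_mul, mul_assoc] using this

lemma σ_comm (i j : ℕ) (h1 : 1 ≤ i) (h2 : i ≤ n - 1) (h3 : 1 ≤ j) (h4 : j ≤ n - 1)
    (h5 : i + 2 ≤ j ∨ j + 2 ≤ i) : Commute (σ n i) (σ n j) := by
  have := rel_one (n := n) (Or.inr (Or.inr (Or.inl ⟨i, j, h1, h2, h3, h4, h5, rfl⟩)))
  simp only [map_mul, map_inv, mul_inv_eq_one] at this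
  exact this

lemma σ_braid (i j : ℕ) (h1 : 1 ≤ i) (h2 : i ≤ n - 1) (h3 : 1 ≤ j) (h4 : j ≤ n - 1)
    (h5 : i + 1 = j ∨ j + 1 = i) :
    σ n i * σ n j * σ n i = σ n j * σ n i * σ n j := by
  have := rel_one (n := n)
    (Or.inr (Or.inr (Or.inr (Or.inl ⟨i, j, h1, h2, h3, h4, h5, rfl⟩))))
  simp only [map_mul, map_inv, mul_inv_eq_one] at this
  exact this

/-- ascending product `σ_a σ_{a+1} ⋯ σ_{a+k-1}` -/
def AP (n a k : ℕ) : EM n := ((List.range' a k).map (σ n)).prod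

/-- descending product `σ_{a+k-1} ⋯ σ_a` -/
def APr (n a k : ℕ) : EM n := ((List.range' a k).reverse.map (σ n)).prod

/-- ascending product of inverses `σ_a⁻¹ ⋯ σ_{a+k-1}⁻¹` -/
def API (n a k : ℕ) : EM n := ((List.range' a k).map (fun j => (σ n j)⁻¹)).prod

lemma mk_σfProd (a b : ℕ) :
    PresentedGroup.mk (rels n) (σfProd n a b) = AP n a (b + 1 - a) := by
  rw [σfProd, MonoidHom.map_list_prod, List.map_map]
  rfl

lemma mk_σfProdRev (a b : ℕ) :
    PresentedGroup.mk (rels n) (σfProdRev n a b) = APr n a (b + 1 - a) := by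
  rw [σfProdRev, MonoidHom.map_list_prod, List.map_map]
  rfl

@[simp] lemma AP_zero (a : ℕ) : AP n a 0 = 1 := rfl
@[simp] lemma APr_zero (a : ℕ) : APr n a 0 = 1 := rfl
@[simp] lemma API_zero (a : ℕ) : API n a 0 = 1 := rfl
@[simp] lemma AP_one (a : ℕ) : AP n a 1 = σ n a := by simp [AP]
@[simp] lemma APr_one (a : ℕ) : APr n a 1 = σ n a := by simp [APr]
@[simp] lemma API_one (a : ℕ) : API n a 1 = (σ n a)⁻¹ := by simp [API]

lemma AP_succ_left (a k : ℕ) : AP n a (k + 1) = σ n a * AP n (a + 1) k := by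
  rw [AP, List.range'_succ]; simp [AP]

lemma AP_succ_right (a k : ℕ) : AP n a (k + 1) = AP n a k * σ n (a + k) := by
  rw [AP, List.range'_1_concat]; simp [AP]

lemma APr_succ_left (a k : ℕ) : APr n a (k + 1) = APr n (a + 1) k * σ n a := by
  rw [APr, List.range'_succ]; simp [APr]

lemma APr_succ_right (a k : ℕ) : APr n a (k + 1) = σ n (a + k) * APr n a k := by
  rw [APr, List.range'_1_concat]; simp [APr]

lemma API_succ_left (a k : ℕ) : API n a (k + 1) = (σ n a)⁻¹ * API n (a + 1) k := by
  rw [API, List.range'_succ]; simp [API]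

lemma API_succ_right (a k : ℕ) : API n a (k + 1) = API n a k * (σ n (a + k))⁻¹ := by
  rw [API, List.range'_1_concat]; simp [API]

lemma AP_append (a p q : ℕ) : AP n a (p + q) = AP n a p * AP n (a + p) q := by
  rw [AP, AP, AP, Nat.add_comm p q, Nat.add_comm q p, ← List.range'_append_1, List.map_append, List.prod_append]

lemma API_mul_APr (a k : ℕ) : API n a k * APr n a k = 1 := by
  induction k with
  | zero => simp
  | succ k ih =>
    rw [API_succ_right, APr_succ_right, mul_assoc, ← mul_assoc (σ n (a+k))⁻¹,
      inv_mul_cancel, one_mul, ih]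

end SphereEMCG
namespace SphereEMCG

variable {n : ℕ}

lemma PQ_rel (hn : 5 ≤ n) : AP n 1 (n-1) * APr n 1 (n-1) = 1 := by
  have := rel_one (n := n) (Or.inr (Or.inr (Or.inr (Or.inr (Or.inl rfl)))))
  rw [map_mul, mk_σfProd, mk_σfProdRev] at this
  have e : n - 1 + 1 - 1 = n - 1 := by omega
  rwa [e] at this

lemma Pn_rel (hn : 5 ≤ n) : (AP n 1 (n-1)) ^ n = 1 := by
  have := rel_one (n := n) (Or.inr (Or.inr (Or.inr (Or.inr (Or.inr rfl)))))
  rw [map_pow, mk_σfProd] at this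
  have e : n - 1 + 1 - 1 = n - 1 := by omega
  rwa [e] at this

lemma commute_AP (c : EM n) (a k : ℕ)
    (h : ∀ j, a ≤ j → j < a + k → Commute c (σ n j)) : Commute c (AP n a k) := by
  apply Commute.list_prod_right
  intro x hx
  simp only [List.mem_map, List.mem_range'_1] at hx
  obtain ⟨j, ⟨hj1, hj2⟩, rfl⟩ := hx
  exact h j hj1 hj2

lemma commute_API (c : EM n) (a k : ℕ)
    (h : ∀ j, a ≤ j → j < a + k → Commute c (σ n j)) : Commute c (API n a k) := by
  apply Commute.list_prod_right
  intro x hx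
  simp only [List.mem_map, List.mem_range'_1] at hx
  obtain ⟨j, ⟨hj1, hj2⟩, rfl⟩ := hx
  exact (h j hj1 hj2).inv_right

lemma shift (hn : 5 ≤ n) (k i : ℕ) (h1 : 1 ≤ i) (h2 : i + 1 ≤ k) (h3 : k ≤ n - 1) :
    AP n 1 k * σ n i = σ n (i + 1) * AP n 1 k := by
  obtain ⟨p, rfl⟩ : ∃ p, i = p + 1 := ⟨i - 1, by omega⟩
  obtain ⟨q, rfl⟩ : ∃ q, k = p + (2 + q) := ⟨k - (p + 2), by omega⟩
  have hsplit : AP n 1 (p + (2 + q)) =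
      AP n 1 p * (σ n (p+1) * (σ n (p+2) * AP n (p+3) q)) := by
    rw [AP_append]
    congr 1
    rw [show 2 + q = (1 + q) + 1 from by omega, AP_succ_left,
      show 1 + q = q + 1 from by omega, AP_succ_left,
      show 1 + p = p + 1 from by omega, show p + 1 + 1 = p + 2 from by omega,
      show p + 2 + 1 = p + 3 from by omega]
  have hc1 : Commute (σ n (p+1)) (AP n (p+3) q) := by
    apply commute_AP
    intro j hj1 hj2
    exact (σ_comm (p+1) j (by omega) (by omega) (by omega) (by omega) (by omega)).symm.symm
  have hc2 : Commute (σ n (p+2)) (AP n 1 p) := by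
    apply commute_AP
    intro j hj1 hj2
    exact (σ_comm (p+2) j (by omega) (by omega) (by omega) (by omega) (by omega))
  have hb : σ n (p+1) * σ n (p+2) * σ n (p+1) = σ n (p+2) * σ n (p+1) * σ n (p+2) :=
    σ_braid (p+1) (p+2) (by omega) (by omega) (by omega) (by omega) (by omega)
  calc AP n 1 (p + (2+q)) * σ n (p+1)
      = AP n 1 p * (σ n (p+1) * (σ n (p+2) * (AP n (p+3) q * σ n (p+1)))) := by
        rw [hsplit]; group
    _ = AP n 1 p * (σ n (p+1) * (σ n (p+2) * (σ n (p+1) * AP n (p+3) q))) := by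
        rw [← hc1.eq]
    _ = AP n 1 p * ((σ n (p+1) * σ n (p+2) * σ n (p+1)) * AP n (p+3) q) := by
        group
    _ = AP n 1 p * ((σ n (p+2) * σ n (p+1) * σ n (p+2)) * AP n (p+3) q) := by
        rw [hb]
    _ = (AP n 1 p * σ n (p+2)) * (σ n (p+1) * (σ n (p+2) * AP n (p+3) q)) := by
        group
    _ = (σ n (p+2) * AP n 1 p) * (σ n (p+1) * (σ n (p+2) * AP n (p+3) q)) := by
        rw [← hc2.eq]
    _ = σ n (p+1+1) * AP n 1 (p + (2+q)) := by
        rw [hsplit]; group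

lemma shift_pow (hn : 5 ≤ n) (k i j : ℕ) (h1 : 1 ≤ i) (h2 : i + j ≤ k) (h3 : k ≤ n - 1) :
    AP n 1 k ^ j * σ n i = σ n (i + j) * AP n 1 k ^ j := by
  induction j with
  | zero => simp
  | succ j ih =>
    have ih' := ih (by omega)
    calc AP n 1 k ^ (j+1) * σ n i = AP n 1 k * (AP n 1 k ^ j * σ n i) := by
          rw [pow_succ']; group
      _ = AP n 1 k * (σ n (i + j) * AP n 1 k ^ j) := by rw [ih']
      _ = (AP n 1 k * σ n (i+j)) * AP n 1 k ^ j := by group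
      _ = (σ n (i+j+1) * AP n 1 k) * AP n 1 k ^ j := by
          rw [shift hn k (i+j) (by omega) (by omega) h3]
      _ = σ n (i + (j+1)) * AP n 1 k ^ (j+1) := by
          rw [pow_succ']
          rw [show i + j + 1 = i + (j+1) from by omega]
          group

end SphereEMCG
namespace SphereEMCG

variable {n : ℕ}

lemma σ_inv_P (hn : 5 ≤ n) (a : ℕ) (h1 : 2 ≤ a) (h2 : a ≤ n - 1) :
    (σ n a)⁻¹ * AP n 1 (n-1) = AP n 1 (n-1) * (σ n (a-1))⁻¹ := by
  have h := shift hn (n-1) (a-1) (by omega) (by omega) (by omega)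
  rw [show a - 1 + 1 = a from by omega] at h
  -- h : AP * σ (a-1) = σ a * AP
  calc (σ n a)⁻¹ * AP n 1 (n-1)
      = (σ n a)⁻¹ * (AP n 1 (n-1) * σ n (a-1)) * (σ n (a-1))⁻¹ := by group
    _ = (σ n a)⁻¹ * (σ n a * AP n 1 (n-1)) * (σ n (a-1))⁻¹ := by rw [h]
    _ = AP n 1 (n-1) * (σ n (a-1))⁻¹ := by group

lemma API_P (hn : 5 ≤ n) (k a : ℕ) (h1 : 2 ≤ a) (h2 : a + k ≤ n) :
    API n a k * AP n 1 (n-1) = AP n 1 (n-1) * API n (a-1) k := by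
  induction k generalizing a with
  | zero => simp
  | succ k ih =>
    calc API n a (k+1) * AP n 1 (n-1)
        = (σ n a)⁻¹ * (API n (a+1) k * AP n 1 (n-1)) := by rw [API_succ_left]; group
      _ = (σ n a)⁻¹ * (AP n 1 (n-1) * API n (a+1-1) k) := by
          rw [ih (a+1) (by omega) (by omega)]
      _ = ((σ n a)⁻¹ * AP n 1 (n-1)) * API n a k := by
          rw [show a+1-1 = a from by omega]; group
      _ = AP n 1 (n-1) * ((σ n (a-1))⁻¹ * API n a k) := by
          rw [σ_inv_P hn a h1 (by omega)]; group
      _ = AP n 1 (n-1) * API n (a-1) (k+1) := by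
          rw [API_succ_left, show a - 1 + 1 = a from by omega]

lemma P_eq (hn : 5 ≤ n) : AP n 1 (n-1) = AP n 1 (n-2) * σ n (n-1) := by
  conv_lhs => rw [show n - 1 = (n-2) + 1 from by omega, AP_succ_right]
  rw [show 1 + (n-2) = n - 1 from by omega]

lemma δ_pow (hn : 5 ≤ n) (k : ℕ) (hk1 : 1 ≤ k) (hk2 : k ≤ n - 1) :
    AP n 1 (n-2) ^ k = AP n 1 (n-1) ^ k * API n (n-k) k := by
  induction k with
  | zero => omega
  | succ k ih =>
    rcases Nat.eq_or_lt_of_le hk1 with h | h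
    · -- k + 1 = 1
      have : k = 0 := by omega
      subst this
      norm_num
      rw [P_eq hn]
      group
    · have hk : 1 ≤ k := by omega
      have ih' := ih hk (by omega)
      calc AP n 1 (n-2) ^ (k+1)
          = (AP n 1 (n-1) ^ k * API n (n-k) k) * AP n 1 (n-2) := by
            rw [pow_succ, ih']
        _ = AP n 1 (n-1) ^ k * (API n (n-k) k * AP n 1 (n-1)) * (σ n (n-1))⁻¹ := by
            rw [P_eq hn]; group
        _ = AP n 1 (n-1) ^ k * (AP n 1 (n-1) * API n (n-k-1) k) * (σ n (n-1))⁻¹ := by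
            rw [API_P hn k (n-k) (by omega) (by omega)]
        _ = AP n 1 (n-1) ^ (k+1) * (API n (n-k-1) k * (σ n (n-k-1+k))⁻¹) := by
            rw [pow_succ, show n-k-1+k = n-1 from by omega]; group
        _ = AP n 1 (n-1) ^ (k+1) * API n (n-(k+1)) (k+1) := by
            rw [← API_succ_right, show n-k-1 = n-(k+1) from by omega]

lemma δ_order (hn : 5 ≤ n) : AP n 1 (n-2) ^ (n-1) = 1 := by
  have h := δ_pow hn (n-1) (by omega) le_rfl
  rw [show n - (n-1) = 1 from by omega] at h
  -- API n 1 (n-1) = (APr n 1 (n-1))⁻¹ = AP n 1 (n-1)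
  have h2 : API n 1 (n-1) = AP n 1 (n-1) := by
    have ha := API_mul_APr (n := n) 1 (n-1)
    have hb := PQ_rel hn
    exact mul_right_cancel (ha.trans hb.symm)
  rw [h2, ← pow_succ, show n - 1 + 1 = n from by omega, Pn_rel hn] at h
  exact h

lemma α₂_eq (hn : 5 ≤ n) : α₂ n = AP n 1 (n-2) * σ n (n-2) := by
  rw [α₂, map_mul, mk_σfProd, σ, show n - 2 + 1 - 1 = n - 2 from by omega]

lemma α₂_pow (hn : 5 ≤ n) (k : ℕ) (hk1 : 1 ≤ k) (hk2 : k ≤ n - 3) :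
    α₂ n ^ k = AP n 1 (n-2) ^ k * AP n (n-1-k) k := by
  induction k with
  | zero => omega
  | succ k ih =>
    rcases Nat.eq_or_lt_of_le hk1 with h | h
    · have : k = 0 := by omega
      subst this
      norm_num
      rw [show n-1-1 = n-2 from by omega]
      exact α₂_eq hn
    · have hk : 1 ≤ k := by omega
      have ih' := ih hk (by omega)
      have hsh := shift_pow hn (n-2) (n-2-k) k (by omega) (by omega) (by omega)
      rw [show n-2-k+k = n-2 from by omega] at hsh
      -- hsh : δ^k * σ (n-2-k) = σ (n-2) * δ^k
      calc α₂ n ^ (k+1) = (AP n 1 (n-2) * σ n (n-2)) * (AP n 1 (n-2) ^ k * AP n (n-1-k) k) := by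
            rw [pow_succ', ih', α₂_eq hn]
        _ = AP n 1 (n-2) * (σ n (n-2) * AP n 1 (n-2) ^ k) * AP n (n-1-k) k := by group
        _ = AP n 1 (n-2) * (AP n 1 (n-2) ^ k * σ n (n-2-k)) * AP n (n-1-k) k := by
            rw [← hsh]
        _ = AP n 1 (n-2) ^ (k+1) * (σ n (n-2-k) * AP n (n-2-k+1) k) := by
            rw [pow_succ', show n-2-k+1 = n-1-k from by omega]; group
        _ = AP n 1 (n-2) ^ (k+1) * AP n (n-1-(k+1)) (k+1) := by
            rw [← AP_succ_left, show n-2-k = n-1-(k+1) from by omega]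

lemma α₂_order (hn : 5 ≤ n) : α₂ n ^ (n-2) = 1 := by
  have h := α₂_pow hn (n-3) (by omega) le_rfl
  have hsh := shift_pow hn (n-2) 1 (n-3) (by omega) (by omega) (by omega)
  rw [show 1 + (n-3) = n-2 from by omega] at hsh
  calc α₂ n ^ (n-2) = α₂ n * α₂ n ^ (n-3) := by
        rw [← pow_succ', show n-3+1 = n-2 from by omega]
    _ = (AP n 1 (n-2) * σ n (n-2)) * (AP n 1 (n-2) ^ (n-3) * AP n (n-1-(n-3)) (n-3)) := by
        rw [h, α₂_eq hn]
    _ = AP n 1 (n-2) * (σ n (n-2) * AP n 1 (n-2) ^ (n-3)) * AP n 2 (n-3) := by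
        rw [show n-1-(n-3) = 2 from by omega]; group
    _ = AP n 1 (n-2) * (AP n 1 (n-2) ^ (n-3) * σ n 1) * AP n 2 (n-3) := by rw [← hsh]
    _ = (AP n 1 (n-2) * AP n 1 (n-2) ^ (n-3)) * (σ n 1 * AP n 2 (n-3)) := by group
    _ = AP n 1 (n-2) ^ (n-2) * AP n 1 (n-2) := by
        rw [← pow_succ', show n-3+1 = n-2 from by omega, ← AP_succ_left,
          show n-3+1 = n-2 from by omega]
    _ = AP n 1 (n-2) ^ (n-1) := by
        rw [← pow_succ, show n-2+1 = n-1 from by omega]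
    _ = 1 := δ_order hn

end SphereEMCG
namespace SphereEMCG

variable {n : ℕ}

lemma T_inv : (T n)⁻¹ = T n := by
  have := T_sq (n := n)
  exact inv_eq_of_mul_eq_one_right this

lemma TσT (i : ℕ) (h1 : 1 ≤ i) (h2 : i ≤ n - 1) :
    T n * σ n i * T n = (σ n i)⁻¹ := by
  have h := Tσ_sq i h1 h2
  have ht := T_sq (n := n)
  calc T n * σ n i * T n
      = (T n * σ n i * (T n * σ n i)) * (σ n i)⁻¹ := by group
    _ = (σ n i)⁻¹ := by rw [h]; group

lemma Tσ_invT (i : ℕ) (h1 : 1 ≤ i) (h2 : i ≤ n - 1) :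
    T n * (σ n i)⁻¹ * T n = σ n i := by
  have h := TσT i h1 h2
  have ht := T_sq (n := n)
  calc T n * (σ n i)⁻¹ * T n
      = ((T n)⁻¹ * σ n i * (T n)⁻¹)⁻¹ := by group
    _ = (T n * σ n i * T n)⁻¹ := by rw [T_inv]
    _ = σ n i := by rw [h, inv_inv]

lemma T_AP (a k : ℕ) (h1 : 1 ≤ a) (h2 : a + k ≤ n) :
    T n * AP n a k * T n = API n a k := by
  induction k generalizing a with
  | zero => simpa using T_sq (n := n)
  | succ k ih =>
    have ht := T_sq (n := n)
    have step : (T n * σ n a * T n) * (T n * AP n (a+1) k * T n)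
        = T n * AP n a (k+1) * T n := by
      rw [AP_succ_left]
      calc (T n * σ n a * T n) * (T n * AP n (a+1) k * T n)
          = T n * σ n a * (T n * T n) * (AP n (a+1) k * T n) := by group
        _ = T n * (σ n a * AP n (a+1) k) * T n := by rw [ht]; group
    calc T n * AP n a (k+1) * T n
        = (T n * σ n a * T n) * (T n * AP n (a+1) k * T n) := step.symm
      _ = (σ n a)⁻¹ * API n (a+1) k := by
          rw [TσT a h1 (by omega), ih (a+1) (by omega) (by omega)]
      _ = API n a (k+1) := (API_succ_left a k).symm

lemma sphere_rel (hn : 5 ≤ n) :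
    ∀ k, 1 ≤ k → k ≤ n-1 →
      APr n 1 (k-1) * AP n 1 (k-1) * (AP n k (n-k) * APr n k (n-k)) = 1 := by
  intro k
  induction k with
  | zero => omega
  | succ k ih =>
    intro hk1 hk2
    rcases Nat.eq_zero_or_pos k with h | h
    · subst h
      simpa using PQ_rel hn
    · have ihh := ih h (by omega)
      -- decompose
      have e1 : APr n 1 k = σ n k * APr n 1 (k-1) := by
        conv_lhs => rw [show k = (k-1) + 1 from by omega, APr_succ_right]
        rw [show 1 + (k-1) = k from by omega]
      have e2 : AP n 1 k = AP n 1 (k-1) * σ n k := by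
        conv_lhs => rw [show k = (k-1) + 1 from by omega, AP_succ_right]
        rw [show 1 + (k-1) = k from by omega]
      have e3 : AP n k (n-k) = σ n k * AP n (k+1) (n-(k+1)) := by
        conv_lhs => rw [show n - k = (n-(k+1)) + 1 from by omega, AP_succ_left]
      have e4 : APr n k (n-k) = APr n (k+1) (n-(k+1)) * σ n k := by
        conv_lhs => rw [show n - k = (n-(k+1)) + 1 from by omega, APr_succ_left]
      rw [e3, e4] at ihh
      set d := APr n 1 (k-1) * AP n 1 (k-1) with hd
      set c := AP n (k+1) (n-(k+1)) * APr n (k+1) (n-(k+1)) with hc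
      -- ihh : d * (σ k * (AP' * (APr' * σ k))) = 1  (roughly)
      have hcc : c = (σ n k)⁻¹ * d⁻¹ * (σ n k)⁻¹ := by
        have : d * (σ n k * c * σ n k) = 1 := by
          rw [hc, hd]
          calc APr n 1 (k-1) * AP n 1 (k-1) *
                (σ n k * (AP n (k+1) (n-(k+1)) * APr n (k+1) (n-(k+1))) * σ n k)
              = APr n 1 (k-1) * AP n 1 (k-1) *
                (σ n k * AP n (k+1) (n-(k+1)) * (APr n (k+1) (n-(k+1)) * σ n k)) := by
                group
            _ = 1 := ihh
        calc c = (σ n k)⁻¹ * (d⁻¹ * (d * (σ n k * c * σ n k))) * (σ n k)⁻¹ := by group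
          _ = (σ n k)⁻¹ * d⁻¹ * (σ n k)⁻¹ := by rw [this]; group
      rw [show k + 1 - 1 = k from rfl, e1, e2, hcc, hd]
      group

end SphereEMCG
namespace SphereEMCG

variable {n : ℕ}

lemma aux_comm {G : Type*} [Group G] (t a b A3 I3 Pr' : G)
    (ht : t * t = 1)
    (hta : t * a * t = a⁻¹) (htb : t * b * t = b⁻¹)
    (htbi : t * b⁻¹ * t = b)
    (htA : t * A3 * t = I3)
    (hIPr : I3 * Pr' = 1)
    (hbA : b * A3 = A3 * b)
    (hD : Pr' * A3 * (a * b * (b * a)) = 1)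
    (hbr : a * b * a = b * a * b) :
    (t * b⁻¹) * (A3 * a * a) * (t * b⁻¹)⁻¹ = A3 * a * a := by
  have htinv : t⁻¹ = t := inv_eq_of_mul_eq_one_right ht
  have ins : ∀ x y : G, (t*x*t)*(t*y*t) = t*(x*y)*t := by
    intro x y
    calc (t*x*t)*(t*y*t) = t*x*(t*t)*(y*t) := by group
      _ = t*(x*y)*t := by rw [ht]; group
  have hbA' : b⁻¹ * A3 = A3 * b⁻¹ := (Commute.inv_left hbA).eq
  have h1 : b * a * b⁻¹ = a⁻¹ * (b * a) := by
    calc b*a*b⁻¹ = a⁻¹ * (a*b*a) * b⁻¹ := by group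
      _ = a⁻¹ * (b*a*b) * b⁻¹ := by rw [hbr]
      _ = a⁻¹ * (b*a) := by group
  have h1' : b * a⁻¹ * b⁻¹ = a⁻¹ * b⁻¹ * a := by
    calc b*a⁻¹*b⁻¹ = (b*a*b⁻¹)⁻¹ := by group
      _ = (a⁻¹*(b*a))⁻¹ := by rw [h1]
      _ = a⁻¹*b⁻¹*a := by group
  have h2 : b * (a⁻¹*a⁻¹) * b⁻¹ = a⁻¹ * (b⁻¹*b⁻¹) * a := by
    calc b*(a⁻¹*a⁻¹)*b⁻¹ = (b*a⁻¹*b⁻¹)*(b*a⁻¹*b⁻¹) := by group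
      _ = (a⁻¹*b⁻¹*a)*(a⁻¹*b⁻¹*a) := by rw [h1']
      _ = a⁻¹*(b⁻¹*b⁻¹)*a := by group
  have hPrA : Pr' * A3 = a⁻¹ * (b⁻¹*b⁻¹) * a⁻¹ := by
    calc Pr' * A3 = (Pr' * A3 * (a*b*(b*a))) * (a*b*(b*a))⁻¹ := by group
      _ = 1 * (a*b*(b*a))⁻¹ := by rw [hD]
      _ = a⁻¹*(b⁻¹*b⁻¹)*a⁻¹ := by group
  have hI : I3 = Pr'⁻¹ := eq_inv_of_mul_eq_one_left hIPr
  have hmid : t*(b⁻¹*(a*(a*b)))*t = b * (a⁻¹*(a⁻¹*b⁻¹)) := by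
    rw [← ins, ← ins, ← ins, htbi, hta, htb]
  calc (t*b⁻¹) * (A3*a*a) * (t*b⁻¹)⁻¹
      = t * (b⁻¹ * A3) * (a*(a*b)) * t := by
        rw [mul_inv_rev, inv_inv, htinv]; group
    _ = t * (A3 * (b⁻¹*(a*(a*b)))) * t := by rw [hbA']; group
    _ = (t*A3*t) * (t*(b⁻¹*(a*(a*b)))*t) := by rw [ins]
    _ = I3 * (b * (a⁻¹*(a⁻¹*b⁻¹))) := by rw [htA, hmid]
    _ = Pr'⁻¹ * (b*(a⁻¹*a⁻¹)*b⁻¹) := by rw [hI]; group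
    _ = Pr'⁻¹ * (a⁻¹*(b⁻¹*b⁻¹)*a) := by rw [h2]
    _ = Pr'⁻¹ * ((a⁻¹*(b⁻¹*b⁻¹)*a⁻¹) * (a*a)) := by group
    _ = Pr'⁻¹ * ((Pr' * A3) * (a*a)) := by rw [hPrA]
    _ = A3 * a * a := by group

lemma α₂_eq' (hn : 5 ≤ n) : α₂ n = AP n 1 (n-3) * σ n (n-2) * σ n (n-2) := by
  rw [α₂_eq hn]
  congr 1
  conv_lhs => rw [show n - 2 = (n-3) + 1 from by omega, AP_succ_right]
  rw [show 1 + (n-3) = n - 2 from by omega]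

lemma hD_fact (hn : 5 ≤ n) :
    APr n 1 (n-3) * AP n 1 (n-3) *
      (σ n (n-2) * σ n (n-1) * (σ n (n-1) * σ n (n-2))) = 1 := by
  have h := sphere_rel hn (n-2) (by omega) (by omega)
  rw [show n - 2 - 1 = n - 3 from by omega, show n - (n-2) = 2 from by omega] at h
  have e3 : AP n (n-2) 2 = σ n (n-2) * σ n (n-1) := by
    rw [show (2:ℕ) = 1 + 1 from rfl, AP_succ_left, AP_one, show n-2+1 = n-1 from by omega]
  have e4 : APr n (n-2) 2 = σ n (n-1) * σ n (n-2) := by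
    rw [show (2:ℕ) = 1 + 1 from rfl, APr_succ_left, APr_one, show n-2+1 = n-1 from by omega]
  rw [e3, e4] at h
  calc APr n 1 (n-3) * AP n 1 (n-3) *
        (σ n (n-2) * σ n (n-1) * (σ n (n-1) * σ n (n-2)))
      = APr n 1 (n-3) * AP n 1 (n-3) *
        (σ n (n-2) * σ n (n-1) * (σ n (n-1) * σ n (n-2))) := rfl
    _ = 1 := h

lemma u_conj (hn : 5 ≤ n) :
    (T n * (σ n (n-1))⁻¹) * α₂ n * (T n * (σ n (n-1))⁻¹)⁻¹ = α₂ n := by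
  rw [α₂_eq' hn]
  apply aux_comm
  · exact T_sq
  · exact TσT (n-2) (by omega) (by omega)
  · exact TσT (n-1) (by omega) (by omega)
  · exact Tσ_invT (n-1) (by omega) (by omega)
  · exact T_AP 1 (n-3) (by omega) (by omega)
  · exact API_mul_APr 1 (n-3)
  · exact (commute_AP (σ n (n-1)) 1 (n-3) (fun j hj1 hj2 =>
      (σ_comm (n-1) j (by omega) (by omega) (by omega) (by omega) (by omega)))).eq
  · exact hD_fact hn
  · exact σ_braid (n-2) (n-1) (by omega) (by omega) (by omega) (by omega) (Or.inl (by omega))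

lemma u_sq (hn : 5 ≤ n) :
    (T n * (σ n (n-1))⁻¹) * (T n * (σ n (n-1))⁻¹) = 1 := by
  calc (T n * (σ n (n-1))⁻¹) * (T n * (σ n (n-1))⁻¹)
      = (T n * (σ n (n-1))⁻¹ * T n) * (σ n (n-1))⁻¹ := by group
    _ = σ n (n-1) * (σ n (n-1))⁻¹ := by rw [Tσ_invT (n-1) (by omega) (by omega)]
    _ = 1 := by group

end SphereEMCG
namespace SphereEMCG

variable {n : ℕ}

/-- permutation assigned to each generator -/
def fPerm (n : ℕ) : Gen n → Equiv.Perm (Fin n)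
  | none => 1
  | some i => Equiv.swap ⟨i.val, by have := i.isLt; omega⟩ ⟨i.val + 1, by have := i.isLt; omega⟩

/-- permutation assigned to `σ_i` -/
def wP (n : ℕ) (i : ℕ) : Equiv.Perm (Fin n) :=
  if h : 1 ≤ i ∧ i ≤ n - 1 then
    Equiv.swap ⟨i - 1, by omega⟩ ⟨i, by omega⟩ else 1

lemma lift_σf (i : ℕ) : FreeGroup.lift (fPerm n) (σf n i) = wP n i := by
  rw [σf, wP]
  split_ifs with h
  · rw [FreeGroup.lift_apply_of]
    have e : fPerm n (some ⟨i - 1, by omega⟩) =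
        Equiv.swap ⟨i - 1, by omega⟩ ⟨i - 1 + 1, by omega⟩ := rfl
    rw [e]
    congr 1
    exact Fin.ext (show i - 1 + 1 = i by omega)
  · exact map_one _

lemma wP_sq (i : ℕ) : wP n i * wP n i = 1 := by
  rw [wP]; split_ifs with h
  · exact Equiv.swap_mul_self _ _
  · exact one_mul 1

lemma swap_commute {α : Type*} [DecidableEq α] {a b c d : α}
    (h1 : a ≠ c) (h2 : a ≠ d) (h3 : b ≠ c) (h4 : b ≠ d) :
    Equiv.swap a b * Equiv.swap c d = Equiv.swap c d * Equiv.swap a b := by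
  have key : Equiv.swap a b * Equiv.swap c d * (Equiv.swap a b)⁻¹ = Equiv.swap c d := by
    calc Equiv.swap a b * Equiv.swap c d * (Equiv.swap a b)⁻¹
        = Equiv.swap (Equiv.swap a b c) (Equiv.swap a b d) :=
          (Equiv.swap_apply_apply _ c d).symm
      _ = Equiv.swap c d := by
          rw [Equiv.swap_apply_of_ne_of_ne h1.symm h3.symm,
            Equiv.swap_apply_of_ne_of_ne h2.symm h4.symm]
  calc Equiv.swap a b * Equiv.swap c d
      = (Equiv.swap a b * Equiv.swap c d * (Equiv.swap a b)⁻¹) * Equiv.swap a b := by group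
    _ = Equiv.swap c d * Equiv.swap a b := by rw [key]

lemma swap_braid {α : Type*} [DecidableEq α] {p q r : α}
    (hpq : p ≠ q) (hqr : q ≠ r) (hpr : p ≠ r) :
    Equiv.swap p q * Equiv.swap q r * Equiv.swap p q
      = Equiv.swap q r * Equiv.swap p q * Equiv.swap q r := by
  have L : Equiv.swap p q * Equiv.swap q r * Equiv.swap p q = Equiv.swap p r := by
    rw [Equiv.swap_comm p q, Equiv.swap_comm q r]
    exact Equiv.swap_mul_swap_mul_swap hqr.symm hpr.symm
  have R : Equiv.swap q r * Equiv.swap p q * Equiv.swap q r = Equiv.swap r p :=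
    Equiv.swap_mul_swap_mul_swap hpq hpr
  rw [L, R, Equiv.swap_comm]

lemma wP_comm (i j : ℕ) (h1 : 1 ≤ i) (h2 : i ≤ n - 1) (h3 : 1 ≤ j) (h4 : j ≤ n - 1)
    (h5 : i + 2 ≤ j ∨ j + 2 ≤ i) : wP n i * wP n j = wP n j * wP n i := by
  rw [wP, wP, dif_pos ⟨h1, h2⟩, dif_pos ⟨h3, h4⟩]
  exact swap_commute (Fin.ne_of_val_ne (by simp; omega)) (Fin.ne_of_val_ne (by simp; omega))
    (Fin.ne_of_val_ne (by simp; omega)) (Fin.ne_of_val_ne (by simp; omega))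

lemma wP_braid (i j : ℕ) (h1 : 1 ≤ i) (h2 : i ≤ n - 1) (h3 : 1 ≤ j) (h4 : j ≤ n - 1)
    (h5 : i + 1 = j ∨ j + 1 = i) :
    wP n i * wP n j * wP n i = wP n j * wP n i * wP n j := by
  rw [wP, wP, dif_pos ⟨h1, h2⟩, dif_pos ⟨h3, h4⟩]
  rcases h5 with h5 | h5
  · have e : (⟨j - 1, by omega⟩ : Fin n) = ⟨i, by omega⟩ := Fin.ext (by simp; omega)
    rw [e]
    exact swap_braid (Fin.ne_of_val_ne (by simp; omega)) (Fin.ne_of_val_ne (by simp; omega))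
      (Fin.ne_of_val_ne (by simp; omega))
  · have e : (⟨i - 1, by omega⟩ : Fin n) = ⟨j, by omega⟩ := Fin.ext (by simp; omega)
    rw [e]
    exact (swap_braid (Fin.ne_of_val_ne (by simp; omega)) (Fin.ne_of_val_ne (by simp; omega))
      (Fin.ne_of_val_ne (by simp; omega))).symm

lemma lift_σfProd (a b : ℕ) :
    FreeGroup.lift (fPerm n) (σfProd n a b)
      = ((List.range' a (b + 1 - a)).map (wP n)).prod := by
  rw [σfProd, map_list_prod, List.map_map]
  exact congrArg List.prod (List.map_congr_left (fun j _ => lift_σf j))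

lemma lift_σfProdRev (a b : ℕ) :
    FreeGroup.lift (fPerm n) (σfProdRev n a b)
      = (((List.range' a (b + 1 - a)).reverse).map (wP n)).prod := by
  rw [σfProdRev, map_list_prod, List.map_map]
  exact congrArg List.prod (List.map_congr_left (fun j _ => lift_σf j))

lemma prod_rev_inv {G : Type*} [Group G] (g : ℕ → G) (hg : ∀ i, g i * g i = 1) :
    ∀ l : List ℕ, (l.map g).prod * (l.reverse.map g).prod = 1 := by
  intro l
  induction l with
  | nil => simp
  | cons a l ih =>
    rw [List.map_cons, List.prod_cons, List.reverse_cons, List.map_append, List.prod_append]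
    calc g a * (l.map g).prod * ((l.reverse.map g).prod * ([a].map g).prod)
        = g a * ((l.map g).prod * (l.reverse.map g).prod) * g a := by
          simp only [List.map_cons, List.map_nil, List.prod_cons, List.prod_nil, mul_one,
            mul_assoc]
      _ = g a * g a := by rw [ih, mul_one]
      _ = 1 := hg a

lemma rot_apply (hn : 5 ≤ n) : ∀ k a (ha : 1 ≤ a) (hak : a + k ≤ n) (x : Fin n),
    (((List.range' a k).map (wP n)).prod) x =
      if x.val + 1 < a then x
      else if x.val = a + k - 1 then ⟨a - 1, by omega⟩
      else if hlt : x.val < a + k - 1 then ⟨x.val + 1, by omega⟩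
      else x := by
  intro k
  induction k with
  | zero =>
    intro a h1 h2 x
    simp only [List.range'_zero, List.map_nil, List.prod_nil, Equiv.Perm.one_apply]
    split_ifs with e1 e2 e3
    · rfl
    · exact Fin.ext (show x.val = a - 1 by omega)
    · exact absurd e3 (by omega)
    · rfl
  | succ k ih =>
    intro a h1 h2 x
    rw [List.range'_succ, List.map_cons, List.prod_cons, Equiv.Perm.mul_apply,
      ih (a+1) (by omega) (by omega) x]
    rw [wP, dif_pos ⟨h1, by omega⟩]
    rcases Nat.lt_or_ge (x.val + 1) (a + 1) with c1 | c1
    · rw [if_pos c1]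
      rcases Nat.eq_or_lt_of_le (show x.val + 1 ≤ a by omega) with e | e
      · -- x.val = a - 1
        rw [show x = (⟨a - 1, by omega⟩ : Fin n) from Fin.ext (show x.val = a - 1 by omega),
          Equiv.swap_apply_left]
        rw [if_neg (by simp; omega), if_neg (by simp; omega), dif_pos (by simp; omega)]
        exact Fin.ext (by simp; omega)
      · rw [Equiv.swap_apply_of_ne_of_ne
          (Fin.ne_of_val_ne (show x.val ≠ a - 1 by omega))
          (Fin.ne_of_val_ne (show x.val ≠ a by omega))]
        rw [if_pos (show x.val + 1 < a from e)]
    · rw [if_neg (by omega)]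
      rcases eq_or_ne x.val ((a+1) + k - 1) with e | e
      · rw [if_pos e]
        rw [show (⟨a + 1 - 1, by omega⟩ : Fin n) = (⟨a, by omega⟩ : Fin n) from
          Fin.ext (by simp), Equiv.swap_apply_right]
        rw [if_neg (by omega), if_pos (show x.val = a + (k+1) - 1 by omega)]
      · rw [if_neg e]
        by_cases c3 : x.val < (a+1) + k - 1
        · rw [dif_pos c3]
          rw [Equiv.swap_apply_of_ne_of_ne
            (Fin.ne_of_val_ne (show x.val + 1 ≠ a - 1 by omega))
            (Fin.ne_of_val_ne (show x.val + 1 ≠ a by omega))]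
          rw [if_neg (show ¬(x.val + 1 < a) by omega),
            if_neg (show ¬(x.val = a + (k+1) - 1) by omega), dif_pos (by omega)]
        · rw [dif_neg c3]
          rw [Equiv.swap_apply_of_ne_of_ne
            (Fin.ne_of_val_ne (show x.val ≠ a - 1 by omega))
            (Fin.ne_of_val_ne (show x.val ≠ a by omega))]
          rw [if_neg (by omega), if_neg (by omega), dif_neg (by omega)]

end SphereEMCG
namespace SphereEMCG

variable {n : ℕ}

lemma wP_apply (hn : 5 ≤ n) (i : ℕ) (h1 : 1 ≤ i) (h2 : i ≤ n - 1) (x : Fin n) :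
    ((wP n i) x).val = if x.val = i - 1 then i else if x.val = i then i - 1 else x.val := by
  rw [wP, dif_pos ⟨h1, h2⟩]
  by_cases e1 : x.val = i - 1
  · rw [if_pos e1, show x = (⟨i-1, by omega⟩ : Fin n) from Fin.ext e1, Equiv.swap_apply_left]
  · rw [if_neg e1]
    by_cases e2 : x.val = i
    · rw [if_pos e2, show x = (⟨i, by omega⟩ : Fin n) from Fin.ext e2, Equiv.swap_apply_right]
    · rw [if_neg e2, Equiv.swap_apply_of_ne_of_ne
        (Fin.ne_of_val_ne (show x.val ≠ i - 1 from e1))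
        (Fin.ne_of_val_ne (show x.val ≠ i from e2))]

/-- permutation image of `α₂` -/
def C2P (n : ℕ) : Equiv.Perm (Fin n) :=
  ((List.range' 1 (n-2)).map (wP n)).prod * wP n (n-2)

lemma C2_val (hn : 5 ≤ n) (x : Fin n) :
    (C2P n x).val =
      if x.val = n-3 then 0 else if x.val < n-3 then x.val + 1 else x.val := by
  have hxlt := x.isLt
  rw [C2P, Equiv.Perm.mul_apply]
  have hw := wP_apply hn (n-2) (by omega) (by omega) x
  set z := wP n (n-2) x with hz
  rw [rot_apply hn (n-2) 1 (by omega) (by omega) z]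
  by_cases e1 : x.val = n-3
  · have hzv : z.val = n-2 := by rw [hw, if_pos (show x.val = n-2-1 by omega)]
    rw [if_neg (show ¬(z.val + 1 < 1) by omega),
      if_pos (show z.val = 1 + (n-2) - 1 by omega), if_pos e1]
  · by_cases e2 : x.val < n-3
    · have hzv : z.val = x.val := by
        rw [hw, if_neg (show ¬(x.val = n-2-1) by omega), if_neg (show ¬(x.val = n-2) by omega)]
      rw [if_neg (show ¬(z.val + 1 < 1) by omega),
        if_neg (show ¬(z.val = 1 + (n-2) - 1) by omega),
        dif_pos (show z.val < 1 + (n-2) - 1 by omega),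
        if_neg e1, if_pos e2]
      exact show z.val + 1 = x.val + 1 by omega
    · by_cases e3 : x.val = n-2
      · have hzv : z.val = n-2-1 := by
          rw [hw, if_neg (show ¬(x.val = n-2-1) by omega), if_pos e3]
        rw [if_neg (show ¬(z.val + 1 < 1) by omega),
          if_neg (show ¬(z.val = 1 + (n-2) - 1) by omega),
          dif_pos (show z.val < 1 + (n-2) - 1 by omega),
          if_neg e1, if_neg e2]
        exact show z.val + 1 = x.val by omega
      · have hzv : z.val = x.val := by
          rw [hw, if_neg (show ¬(x.val = n-2-1) by omega), if_neg (show ¬(x.val = n-2) by omega)]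
        rw [if_neg (show ¬(z.val + 1 < 1) by omega),
          if_neg (show ¬(z.val = 1 + (n-2) - 1) by omega),
          dif_neg (show ¬(z.val < 1 + (n-2) - 1) by omega),
          if_neg e1, if_neg e2]
        exact hzv

lemma perm_pow_fix {α : Type*} (g : Equiv.Perm α) (x : α) (h : g x = x) :
    ∀ k, (g ^ k) x = x := by
  intro k
  induction k with
  | zero => rfl
  | succ k ih => rw [pow_succ, Equiv.Perm.mul_apply, h, ih]

lemma C2_pow_zero (hn : 5 ≤ n) :
    ∀ m, ((C2P n ^ m) ⟨0, by omega⟩).val = m % (n-2) := by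
  intro m
  induction m with
  | zero =>
    simp only [pow_zero, Equiv.Perm.one_apply]
    exact (Nat.zero_mod _).symm
  | succ m ih =>
    rw [pow_succ', Equiv.Perm.mul_apply, C2_val hn, ih]
    by_cases hc : m % (n-2) = n-3
    · rw [if_pos hc]
      have h0 : (m+1) % (n-2) = 0 := by
        rw [Nat.add_mod, Nat.mod_eq_of_lt (show 1 < n-2 by omega), hc,
          show n-3+1 = n-2 from by omega, Nat.mod_self]
      exact h0.symm
    · have hlt := Nat.mod_lt m (show 0 < n-2 by omega)
      rw [if_neg hc, if_pos (show m % (n-2) < n-3 by omega)]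
      have h0 : (m+1) % (n-2) = m % (n-2) + 1 := by
        rw [Nat.add_mod, Nat.mod_eq_of_lt (show 1 < n-2 by omega),
          Nat.mod_eq_of_lt (by omega)]
      exact h0.symm

lemma C2_fix_last (hn : 5 ≤ n) :
    ∀ m, ((C2P n ^ m) ⟨n-1, by omega⟩) = ⟨n-1, by omega⟩ := by
  apply perm_pow_fix
  apply Fin.ext
  rw [C2_val hn]
  rw [if_neg (show ¬((n:ℕ)-1 = n-3) by omega), if_neg (show ¬((n:ℕ)-1 < n-3) by omega)]

lemma SP_fix (hn : 5 ≤ n) (p : Fin n) (hp : p.val < n - 2) : wP n (n-1) p = p := by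
  apply Fin.ext
  rw [wP_apply hn (n-1) (by omega) le_rfl]
  rw [if_neg (show ¬(p.val = n-1-1) by omega), if_neg (show ¬(p.val = n-1) by omega)]

lemma SP_last (hn : 5 ≤ n) : ((wP n (n-1)) ⟨n-1, by omega⟩).val = n-2 := by
  have h := wP_apply hn (n-1) (by omega) le_rfl ⟨n-1, by omega⟩
  rw [if_neg (show ¬((n:ℕ)-1 = n-1-1) by omega),
    if_pos (show (n:ℕ)-1 = n-1 from rfl)] at h
  omega

lemma lift_rels (hn : 5 ≤ n) : ∀ r ∈ rels n, FreeGroup.lift (fPerm n) r = 1 := by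
  intro r hr
  simp only [rels, Set.mem_setOf_eq] at hr
  rcases hr with h | ⟨i, h1, h2, h⟩ | ⟨i, j, h1, h2, h3, h4, h5, h⟩ |
    ⟨i, j, h1, h2, h3, h4, h5, h⟩ | h | h <;> subst h
  · simp [map_mul, Tf, FreeGroup.lift_apply_of, fPerm]
  · simp only [map_mul, Tf, FreeGroup.lift_apply_of, lift_σf, fPerm, one_mul]
    exact wP_sq i
  · simp only [map_mul, map_inv, lift_σf]
    rw [wP_comm i j h1 h2 h3 h4 h5]
    group
  · simp only [map_mul, map_inv, lift_σf]
    rw [wP_braid i j h1 h2 h3 h4 h5]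
    group
  · rw [map_mul, lift_σfProd, lift_σfProdRev]
    exact prod_rev_inv (wP n) wP_sq _
  · rw [map_pow, lift_σfProd, show n-1+1-1 = n-1 from by omega]
    apply Equiv.ext
    intro x
    have hxlt := x.isLt
    show _ = x
    have key : ∀ m (y : Fin n),
        ((((List.range' 1 (n-1)).map (wP n)).prod ^ m) y).val = (y.val + m) % n := by
      intro m
      induction m with
      | zero =>
        intro y
        simp only [pow_zero, Equiv.Perm.one_apply]
        rw [Nat.add_zero, Nat.mod_eq_of_lt y.isLt]
      | succ m ih =>
        intro y
        rw [pow_succ, Equiv.Perm.mul_apply]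
        set z := (((List.range' 1 (n-1)).map (wP n)).prod) y with hzdef
        have hzval : z.val =
            if y.val = n-1 then 0 else y.val + 1 := by
          rw [hzdef, rot_apply hn (n-1) 1 (by omega) (by omega) y]
          by_cases e1 : y.val = n-1
          · rw [if_neg (show ¬(y.val + 1 < 1) by omega),
              if_pos (show y.val = 1 + (n-1) - 1 by omega), if_pos e1]
          · rw [if_neg (show ¬(y.val + 1 < 1) by omega),
              if_neg (show ¬(y.val = 1 + (n-1) - 1) by omega),
              dif_pos (show y.val < 1 + (n-1) - 1 by have := y.isLt; omega),
              if_neg e1]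
        rw [ih z, hzval]
        by_cases e1 : y.val = n-1
        · rw [if_pos e1]
          have : (y.val + (m+1)) % n = m % n := by
            rw [show y.val + (m+1) = m + n from by omega, Nat.add_mod_right]
          rw [this, Nat.zero_add]
        · rw [if_neg e1]
          have : y.val + 1 + m = y.val + (m+1) := by omega
          rw [this]
    apply Fin.ext
    rw [key n x, Nat.add_mod_right, Nat.mod_eq_of_lt hxlt]

/-- the permutation representation of `EM n` -/
noncomputable def φh (n : ℕ) (hn : 5 ≤ n) : EM n →* Equiv.Perm (Fin n) :=
  PresentedGroup.toGroup (lift_rels hn)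

lemma φh_mk (hn : 5 ≤ n) (g : FreeGroup (Gen n)) :
    φh n hn (PresentedGroup.mk (rels n) g) = FreeGroup.lift (fPerm n) g := rfl

lemma φh_T (hn : 5 ≤ n) : φh n hn (T n) = 1 := by
  rw [T, φh_mk, Tf, FreeGroup.lift_apply_of]
  rfl

lemma φh_σ (hn : 5 ≤ n) (i : ℕ) : φh n hn (σ n i) = wP n i := by
  rw [σ, φh_mk, lift_σf]

lemma φh_α₂ (hn : 5 ≤ n) : φh n hn (α₂ n) = C2P n := by
  rw [α₂, φh_mk, map_mul, lift_σfProd, lift_σf, show n-2+1-1 = n-2 from by omega, C2P]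

lemma φh_u (hn : 5 ≤ n) : φh n hn (T n * (σ n (n-1))⁻¹) = wP n (n-1) := by
  rw [map_mul, map_inv, φh_T hn, φh_σ hn, one_mul]
  exact inv_eq_of_mul_eq_one_right (wP_sq _)

end SphereEMCG
open SphereEMCG in
/-- For `n ≥ 5`, in the extended mapping class group of the `n`-punctured sphere,
`T σ_{n-1}⁻¹` commutes with `α₂`, and `T σ_{n-1}⁻¹ α₂` has finite order, equal
to `n - 2` if `n` is even and `2(n - 2)` if `n` is odd. -/
theorem Tσ_inv_α₂_commute_and_order (n : ℕ) (hn : 5 ≤ n) :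
    (T n * (σ n (n - 1))⁻¹) * α₂ n * (T n * (σ n (n - 1))⁻¹)⁻¹ = α₂ n ∧
    IsOfFinOrder (T n * (σ n (n - 1))⁻¹ * α₂ n) ∧
    orderOf (T n * (σ n (n - 1))⁻¹ * α₂ n) =
      (if Even n then n - 2 else 2 * (n - 2)) := by
  have hcomm := u_conj hn
  have hu2 := u_sq hn
  have hα := α₂_order hn
  have hCu : Commute (T n * (σ n (n-1))⁻¹) (α₂ n) := by
    have h := u_conj hn
    rw [mul_inv_eq_iff_eq_mul] at h
    exact h
  set N := (if Even n then n - 2 else 2*(n-2)) with hN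
  have hNpos : 0 < N := by
    by_cases h : Even n <;> simp only [hN, if_pos, if_neg, h, if_true, if_false] <;> omega
  have hNeven : N % 2 = 0 := by
    by_cases h : Even n
    · rw [hN, if_pos h]
      obtain ⟨m, hm⟩ := h
      omega
    · rw [hN, if_neg h]
      omega
  have hNdvd : (n-2) ∣ N := by
    by_cases h : Even n
    · rw [hN, if_pos h]
    · rw [hN, if_neg h]
      exact dvd_mul_left (n-2) 2
  have hu2' : (T n * (σ n (n-1))⁻¹) ^ 2 = 1 := by rw [pow_two, hu2]
  have hxN : (T n * (σ n (n-1))⁻¹ * α₂ n) ^ N = 1 := by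
    rw [hCu.mul_pow]
    have h1 : (T n * (σ n (n-1))⁻¹) ^ N = 1 := by
      obtain ⟨m, hm⟩ := Nat.dvd_of_mod_eq_zero hNeven
      rw [hm, pow_mul, hu2', one_pow]
    have h2 : (α₂ n) ^ N = 1 := by
      obtain ⟨m, hm⟩ := hNdvd
      rw [hm, pow_mul, hα, one_pow]
    rw [h1, h2, one_mul]
  have hfin : IsOfFinOrder (T n * (σ n (n-1))⁻¹ * α₂ n) :=
    isOfFinOrder_iff_pow_eq_one.mpr ⟨N, hNpos, hxN⟩
  refine ⟨hcomm, hfin, ?_⟩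
  have hdvd1 : orderOf (T n * (σ n (n-1))⁻¹ * α₂ n) ∣ N := orderOf_dvd_of_pow_eq_one hxN
  set k := orderOf (T n * (σ n (n-1))⁻¹ * α₂ n) with hk
  have hkpos : 0 < k := hfin.orderOf_pos
  have hkone : (T n * (σ n (n-1))⁻¹ * α₂ n) ^ k = 1 := pow_orderOf_eq_one _
  -- image under the permutation representation
  have hφx : φh n hn (T n * (σ n (n-1))⁻¹ * α₂ n) = wP n (n-1) * C2P n := by
    rw [map_mul, φh_u hn, φh_α₂ hn]
  have hφcomm : Commute (wP n (n-1)) (C2P n) := by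
    have h := hCu.map (φh n hn)
    rwa [φh_u hn, φh_α₂ hn] at h
  have hφk : (wP n (n-1)) ^ k * (C2P n) ^ k = 1 := by
    have h0 : φh n hn ((T n * (σ n (n-1))⁻¹ * α₂ n) ^ k) = 1 := by
      rw [hkone, map_one]
    rwa [map_pow, hφx, hφcomm.mul_pow] at h0
  -- (n-2) ∣ k by evaluating at 0
  have hk1 : (n - 2) ∣ k := by
    have h0 := congrArg (fun (g : Equiv.Perm (Fin n)) => g ⟨0, by omega⟩) hφk
    simp only [Equiv.Perm.mul_apply, Equiv.Perm.one_apply] at h0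
    have hC : ((C2P n ^ k) ⟨0, by omega⟩).val = k % (n-2) := C2_pow_zero hn k
    have hfixS : (wP n (n-1) ^ k) ((C2P n ^ k) ⟨0, by omega⟩)
        = (C2P n ^ k) ⟨0, by omega⟩ := by
      apply perm_pow_fix
      apply SP_fix hn
      rw [hC]
      have := Nat.mod_lt k (show 0 < n-2 by omega)
      omega
    rw [hfixS] at h0
    apply Nat.dvd_of_mod_eq_zero
    have := congrArg Fin.val h0
    rw [hC] at this
    simpa using this
  -- if n is odd then 2 ∣ k
  have hk2 : ¬ Even n → 2 ∣ k := by
    intro hodd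
    by_contra hnd
    have hkodd : k % 2 = 1 := by omega
    have h0 := congrArg (fun (g : Equiv.Perm (Fin n)) => g ⟨n-1, by omega⟩) hφk
    simp only [Equiv.Perm.mul_apply, Equiv.Perm.one_apply] at h0
    rw [C2_fix_last hn k] at h0
    have hSk : (wP n (n-1)) ^ k = wP n (n-1) := by
      have h2 : (wP n (n-1)) ^ 2 = 1 := by rw [pow_two]; exact wP_sq _
      calc (wP n (n-1)) ^ k = (wP n (n-1)) ^ (2 * (k/2) + 1) := by
            rw [show 2 * (k/2) + 1 = k from by omega]
        _ = ((wP n (n-1)) ^ 2) ^ (k/2) * wP n (n-1) := by rw [pow_add, pow_mul, pow_one]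
        _ = wP n (n-1) := by rw [h2, one_pow, one_mul]
    rw [hSk] at h0
    have := congrArg Fin.val h0
    rw [SP_last hn] at this
    simp at this
    omega
  have hdvd2 : N ∣ k := by
    by_cases h : Even n
    · rw [hN, if_pos h]
      exact hk1
    · rw [hN, if_neg h]
      have hcop : Nat.Coprime 2 (n-2) := by
        rw [Nat.coprime_two_left]
        rcases Nat.not_even_iff_odd.mp h with ⟨m, hm⟩
        exact ⟨m - 1, by omega⟩
      exact hcop.mul_dvd_of_dvd_of_dvd (hk2 h) hk1
  exact Nat.dvd_antisymm hdvd1 hdvd2
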